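/- For each integer d with d ≥ -1 and d ≠ 0, the function φ(u,v) = (1/d²) u^{d+1} v^{d+1} (v^{−d} − u^{−d}) on R_{>0} × R_{>0} (polynomial when d ≥ 1) is skew-symmetric (φ(u,v) = −φ(v,u)) and solves the one-dimensional classical Yang–Baxter equation: φ(u,v)[∂_u φ(w,u) + ∂_v φ(w,v)] + φ(v,w)[∂_v φ(u,v) + ∂_w φ(u,w)] + φ(w,u)[∂_w φ(v,w) + ∂_u φ(v,u)] = 0. -/

import Mathlib

/-!
Up to the factor `1 / d²`, `φ(u,v) = u^{d+1} v - u v^{d+1}` on the positive half-line: it is the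
wedge `x∂ ∧ x^{d+1}∂` of two vector fields, and `[x∂, x^{d+1}∂] = d x^{d+1}∂`. The wedge of two
elements spanning a subalgebra solves the CYBE; concretely, for `φ(a,b) = c (f(a) b - a f(b))` the
CYBE expression is `c² Σ_cyc u f'(u) (w f(v) - v f(w))`, which vanishes as soon as
`x f'(x) = k f(x) + m x`.
-/

/-- Partial derivative with respect to the second argument. -/
noncomputable def D2 (f : ℝ → ℝ → ℝ) (a b : ℝ) : ℝ := deriv (fun y => f a y) b

/-- The one-dimensional CYBE expression
`Φ(w,u,v) = φ(u,v)[∂_uφ(w,u)+∂_vφ(w,v)] + φ(v,w)[∂_vφ(u,v)+∂_wφ(u,w)]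
 + φ(w,u)[∂_wφ(v,w)+∂_uφ(v,u)]`. -/
noncomputable def cybe1 (φ : ℝ → ℝ → ℝ) (u v w : ℝ) : ℝ :=
  φ u v * (D2 φ w u + D2 φ w v) + φ v w * (D2 φ u v + D2 φ u w) +
    φ w u * (D2 φ v w + D2 φ v u)

section CongrOnOpen

variable {φ ψ : ℝ → ℝ → ℝ} {s : Set ℝ}

theorem D2_congr_of_eqOn (hs : IsOpen s) (h : ∀ a ∈ s, ∀ b ∈ s, φ a b = ψ a b)
    {a b : ℝ} (ha : a ∈ s) (hb : b ∈ s) : D2 φ a b = D2 ψ a b :=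
  Filter.EventuallyEq.deriv_eq <| Filter.eventually_of_mem (hs.mem_nhds hb) fun y hy => h a ha y hy

theorem cybe1_congr_of_eqOn (hs : IsOpen s) (h : ∀ a ∈ s, ∀ b ∈ s, φ a b = ψ a b)
    {u v w : ℝ} (hu : u ∈ s) (hv : v ∈ s) (hw : w ∈ s) : cybe1 φ u v w = cybe1 ψ u v w := by
  simp only [cybe1, h _ hu _ hv, h _ hv _ hw, h _ hw _ hu, D2_congr_of_eqOn hs h hu hv,
    D2_congr_of_eqOn hs h hu hw, D2_congr_of_eqOn hs h hv hu, D2_congr_of_eqOn hs h hv hw,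
    D2_congr_of_eqOn hs h hw hu, D2_congr_of_eqOn hs h hw hv]

end CongrOnOpen

section Wedge

variable {f f' : ℝ → ℝ} (c : ℝ)

theorem D2_wedge {a b : ℝ} (hb : HasDerivAt f (f' b) b) :
    D2 (fun a b => c * (f a * b - a * f b)) a b = c * (f a - a * f' b) := by
  have := (((hasDerivAt_id b).const_mul (f a)).sub (hb.const_mul a)).const_mul c
  simpa [D2] using this.deriv

theorem cybe1_wedge_eq_zero {s : Set ℝ} (k m : ℝ) (hf : ∀ x ∈ s, HasDerivAt f (f' x) x)
    (hsub : ∀ x ∈ s, x * f' x = k * f x + m * x) {u v w : ℝ} (hu : u ∈ s) (hv : v ∈ s)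
    (hw : w ∈ s) : cybe1 (fun a b => c * (f a * b - a * f b)) u v w = 0 := by
  simp only [cybe1, D2_wedge c (hf u hu), D2_wedge c (hf v hv), D2_wedge c (hf w hw)]
  linear_combination c ^ 2 * (w * f v - v * f w) * hsub u hu +
    c ^ 2 * (u * f w - w * f u) * hsub v hv + c ^ 2 * (v * f u - u * f v) * hsub w hw

end Wedge

theorem zpow_add_one_mul_zpow_add_one_mul_sub {K : Type*} [Field K] {x y : K} (hx : x ≠ 0)
    (hy : y ≠ 0) (n : ℤ) :
    x ^ (n + 1) * y ^ (n + 1) * (y ^ (-n) - x ^ (-n)) = x ^ (n + 1) * y - x * y ^ (n + 1) := by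
  have hx' : x ^ (n + 1) * x ^ (-n) = x := by rw [← zpow_add₀ hx]; simp
  have hy' : y ^ (n + 1) * y ^ (-n) = y := by rw [← zpow_add₀ hy]; simp
  linear_combination x ^ (n + 1) * hy' - y ^ (n + 1) * hx'

theorem canonical_r_matrix_W1_general (d : ℤ) :
    let φ : ℝ → ℝ → ℝ := fun u v =>
      (1 / (d : ℝ) ^ 2) * u ^ (d + 1) * v ^ (d + 1) * (v ^ (-d) - u ^ (-d))
    (∀ u v : ℝ, 0 < u → 0 < v → φ u v = -φ v u) ∧
      (∀ u v w : ℝ, 0 < u → 0 < v → 0 < w → cybe1 φ u v w = 0) := by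
  intro φ
  refine ⟨fun u v _ _ => by simp only [φ]; ring, fun u v w hu hv hw => ?_⟩
  have hφ : ∀ a ∈ Set.Ioi (0 : ℝ), ∀ b ∈ Set.Ioi (0 : ℝ),
      φ a b = 1 / (d : ℝ) ^ 2 * (a ^ (d + 1) * b - a * b ^ (d + 1)) := fun a ha b hb => by
    rw [← zpow_add_one_mul_zpow_add_one_mul_sub (Set.mem_Ioi.mp ha).ne' (Set.mem_Ioi.mp hb).ne']
    ring
  rw [cybe1_congr_of_eqOn isOpen_Ioi hφ hu hv hw]
  refine cybe1_wedge_eq_zero _ (d + 1) 0 (s := Set.Ioi 0) (f' := fun x => (d + 1) * x ^ d)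
    (fun x hx => by simpa using hasDerivAt_zpow (d + 1) x (Or.inl (Set.mem_Ioi.mp hx).ne'))
    (fun x hx => ?_) hu hv hw
  rw [zpow_add_one₀ (Set.mem_Ioi.mp hx).ne']
  ring

/-- For `d ≥ -1`, `d ≠ 0`, the function `φ(u,v) = (1/d²) u^{d+1} v^{d+1}(v^{−d} − u^{−d})`
is skew-symmetric and solves the one-dimensional CYBE on `ℝ_{>0} × ℝ_{>0}`. -/
theorem canonical_r_matrix_W1 (d : ℤ) (hd1 : -1 ≤ d) (hd0 : d ≠ 0) :
    let φ : ℝ → ℝ → ℝ := fun u v =>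
      (1 / (d : ℝ) ^ 2) * u ^ (d + 1) * v ^ (d + 1) * (v ^ (-d) - u ^ (-d))
    (∀ u v : ℝ, 0 < u → 0 < v → φ u v = -φ v u) ∧
      (∀ u v w : ℝ, 0 < u → 0 < v → 0 < w → cybe1 φ u v w = 0) :=
  canonical_r_matrix_W1_general d
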